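/- There exists x with 0 < x ≤ 1/8 such that the positive definite matrix V(x) satisfies Simon's condition det A·det B + (1 − det C)² − I₄ ≥ det A + det B (equivalently (1/2)+x(8x−5) ≥ 0) but violates the Heisenberg condition V(x) + iΩ ≥ 0. Hence Simon's genuineness condition alone is not equivalent to the uncertainty principle for positive definite matrices. -/

import Mathlib

open Matrix
open scoped ComplexOrder

def omega2 : Matrix (Fin 2) (Fin 2) ℝ := !![0, 1; -1, 0]

/-- The two-mode symplectic form Ω = ω ⊕ ω, in block form. -/
def Omega2mode : Matrix (Fin 2 ⊕ Fin 2) (Fin 2 ⊕ Fin 2) ℝ :=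
  Matrix.fromBlocks omega2 0 0 omega2

noncomputable def cplx {ι : Type*} (M : Matrix ι ι ℝ) : Matrix ι ι ℂ :=
  M.map Complex.ofReal

/-- Diagonal blocks A(x) = B(x) of the family V(x). -/
noncomputable def Ax (x : ℝ) : Matrix (Fin 2) (Fin 2) ℝ :=
  (1 / 2 : ℝ) • !![1 + 4 * x, 0; 0, 1 + 4 * x]

/-- Off-diagonal block C(x) of the family V(x). -/
noncomputable def Cx (x : ℝ) : Matrix (Fin 2) (Fin 2) ℝ :=
  (1 / 2 : ℝ) • !![-1 + 4 * x, 0; 0, -(4 * x)]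

/-- The family V(x) of Eq. (63), in block form [[A,C],[Cᵀ,A]]. -/
noncomputable def Vx (x : ℝ) : Matrix (Fin 2 ⊕ Fin 2) (Fin 2 ⊕ Fin 2) ℝ :=
  Matrix.fromBlocks (Ax x) (Cx x) (Cx x)ᵀ (Ax x)

/-! At `x = 1/8` the blocks are scalar, `A = B = (3/4)·1` and `C = -(1/4)·1`, so `V` is
positive definite because `|c| < a`, and Simon's inequality holds with equality, `9/8 = 9/8`.
The Heisenberg condition, however, fails: `(1, i, 1, i)` is an eigenvector of `V + iΩ` with
eigenvalue `a + c - 1 = -1/2`. -/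

theorem posDef_fromBlocks_smul_one {n : Type*} [Fintype n] [DecidableEq n] {a c : ℝ}
    (h : |c| < a) :
    (fromBlocks (a • 1 : Matrix n n ℝ) (c • 1 : Matrix n n ℝ) (c • 1) (a • 1)).PosDef := by
  refine posDef_iff_dotProduct_mulVec.mpr ⟨?_, fun x hx => ?_⟩
  · simp [IsHermitian, fromBlocks_transpose]
  rw [← Sum.elim_comp_inl_inr x] at hx ⊢
  set u := x ∘ Sum.inl
  set w := x ∘ Sum.inr
  have hS : 0 < u ⬝ᵥ u + w ⬝ᵥ w := by
    simpa [sumElim_dotProduct_sumElim] using dotProduct_star_self_pos_iff.mpr hx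
  have hplus : 0 ≤ (u + w) ⬝ᵥ (u + w) := by simpa using dotProduct_star_self_nonneg (u + w)
  have hminus : 0 ≤ (u - w) ⬝ᵥ (u - w) := by simpa using dotProduct_star_self_nonneg (u - w)
  simp only [add_dotProduct, dotProduct_add, sub_dotProduct, dotProduct_sub,
    dotProduct_comm w u] at hplus hminus
  simp only [fromBlocks_mulVec, Sum.elim_comp_inl, Sum.elim_comp_inr, smul_mulVec,
    one_mulVec, star_trivial, sumElim_dotProduct_sumElim, dotProduct_add,
    dotProduct_smul, smul_eq_mul, dotProduct_comm w u]
  -- `(u ± w) ⬝ᵥ (u ± w) ≥ 0` gives `2 |u ⬝ᵥ w| ≤ u ⬝ᵥ u + w ⬝ᵥ w`.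
  rcases abs_cases c with ⟨hc, hc0⟩ | ⟨hc, hc0⟩ <;> rw [hc] at h
  · nlinarith [mul_pos (sub_pos.mpr h) hS, mul_nonneg hc0 hplus]
  · nlinarith [mul_pos (sub_pos.mpr h) hS, mul_nonneg (neg_nonneg.mpr hc0.le) hminus]

theorem not_posSemidef_of_mulVec_eq_smul {n 𝕜 : Type*} [Fintype n] [RCLike 𝕜]
    {M : Matrix n n 𝕜} {v : n → 𝕜} {μ : ℝ} (hv : v ≠ 0) (hμ : μ < 0)
    (hMv : M *ᵥ v = (μ : 𝕜) • v) : ¬ M.PosSemidef := fun hM => by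
  have hform := hM.dotProduct_mulVec_nonneg v
  rw [hMv, dotProduct_smul, smul_eq_mul] at hform
  exact (mul_neg_of_neg_of_pos (RCLike.ofReal_lt_zero.mpr hμ)
    (dotProduct_star_self_pos_iff.mpr hv)).not_ge hform

theorem omega2_mul_self : omega2 * omega2 = -1 := by
  ext i j; fin_cases i <;> fin_cases j <;> simp [omega2]

theorem trace_smul_one_mul_omega2_chain (a b c : ℝ) :
    ((a • 1 : Matrix (Fin 2) (Fin 2) ℝ) * omega2 * (c • 1 : Matrix (Fin 2) (Fin 2) ℝ) *
      omega2 * (b • 1) * omega2 * (c • 1 : Matrix (Fin 2) (Fin 2) ℝ)ᵀ * omega2).trace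
      = 2 * a * b * c ^ 2 := by
  simp [← mul_assoc, omega2_mul_self]
  ring

-- `V` acts on `(u, u)` as `a + c`, while `iω` maps `(1, i)` to `-(1, i)`.
theorem mulVec_heisenberg_eigenvector (a c : ℝ) :
    (cplx (fromBlocks (a • 1) (c • 1) (c • 1) (a • 1)) + Complex.I • cplx Omega2mode) *ᵥ
        Sum.elim ![1, Complex.I] ![1, Complex.I]
      = ((a + c - 1 : ℝ) : ℂ) • Sum.elim ![1, Complex.I] ![1, Complex.I] := by
  ext i
  rcases i with i | i <;> fin_cases i <;>
    simp [cplx, Omega2mode, omega2, mulVec, dotProduct, Fintype.sum_sum_type] <;> ring_nf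

theorem Ax_eq_smul_one (x : ℝ) : Ax x = ((1 + 4 * x) / 2) • 1 := by
  ext i j; fin_cases i <;> fin_cases j <;> simp [Ax] <;> ring

theorem Cx_one_div_eight : Cx (1 / 8) = (-(1 / 4) : ℝ) • (1 : Matrix (Fin 2) (Fin 2) ℝ) := by
  ext i j; fin_cases i <;> fin_cases j <;> norm_num [Cx]

theorem Vx_one_div_eight :
    Vx (1 / 8) = fromBlocks ((3 / 4 : ℝ) • 1) ((-(1 / 4) : ℝ) • 1) ((-(1 / 4) : ℝ) • 1)
      ((3 / 4 : ℝ) • 1) := by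
  rw [Vx, Ax_eq_smul_one, Cx_one_div_eight, transpose_smul, transpose_one]
  norm_num

/-- There is x with 0 < x ≤ 1/8 such that V(x) is positive definite and satisfies Simon's
condition det A det B + (1 − det C)² − I₄ ≥ det A + det B (equivalently
1/2 + x(8x−5) ≥ 0), yet violates the Heisenberg condition V(x) + iΩ ≥ 0. -/
theorem simon_condition_not_sufficient :
    ∃ x : ℝ, 0 < x ∧ x ≤ 1 / 8 ∧ (Vx x).PosDef ∧
      (Ax x).det + (Ax x).det
        ≤ (Ax x).det * (Ax x).det + (1 - (Cx x).det) ^ 2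
          - (Ax x * omega2 * Cx x * omega2 * Ax x * omega2 * (Cx x)ᵀ * omega2).trace ∧
      0 ≤ 1 / 2 + x * (8 * x - 5) ∧
      ¬ (cplx (Vx x) + Complex.I • cplx Omega2mode).PosSemidef := by
  refine ⟨1 / 8, by norm_num, le_rfl, ?_, ?_, by norm_num, ?_⟩
  · rw [Vx_one_div_eight]
    exact posDef_fromBlocks_smul_one (by norm_num [abs_of_neg])
  · rw [Ax_eq_smul_one, Cx_one_div_eight, trace_smul_one_mul_omega2_chain]
    norm_num [det_neg]
  · rw [Vx_one_div_eight]
    refine not_posSemidef_of_mulVec_eq_smul (μ := 3 / 4 + -(1 / 4) - 1) ?_ (by norm_num)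
      (mulVec_heisenberg_eigenvector _ _)
    exact fun h => by simpa using congrFun h (Sum.inl 0)
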